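/- Let λ : ℕ → ℝ be summable with λ(n) > 0 for all n, k : ℕ → ℝ with k(j) > 0, and ν(I) = (I!/|I|!)·λ(|I|)⁻¹·∏_j k(j)^(2·I(j)). Let a : (ℕ →₀ ℕ) → ℂ satisfy ∑'_I |a(I)|²·ν(I) < ∞, and suppose that for every u in the open unit ball of ℓ², ∑'_I a(I)·∏_j (k(j)·u(j))^(I(j)) = 0. Then a(I) = 0 for every multi-index I. -/

import Mathlib

open scoped BigOperators

/-- The degree `|I| = ∑_j I j` of a multi-index. -/
noncomputable def mdeg (I : ℕ →₀ ℕ) : ℕ := I.sum fun _ n => n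

/-- The factorial `I! = ∏_j (I j)!` of a multi-index. -/
noncomputable def mfact (I : ℕ →₀ ℕ) : ℕ := I.prod fun _ n => n.factorial

/-- The weight `ν(I) = (I!/|I|!)·λ(|I|)⁻¹·∏_j k(j)^(2·I(j))`. -/
noncomputable def nuwt (lam : ℕ → ℝ) (k : ℕ → ℝ) (I : ℕ →₀ ℕ) : ℝ :=
  ((mfact I : ℝ) / (Nat.factorial (mdeg I) : ℝ)) * (lam (mdeg I))⁻¹ *
    ∏ j ∈ I.support, k j ^ (2 * I j)

/-!
Fix `I` and put `s = supp I`. For `x : ℕ → ℂ` and small `t`, the point `t • x` restricted to `s`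
lies in the unit ball. There the series converges absolutely: by AM–GM against the weight `ν`,
`|a J| ∏ |k_j u_j|^{J_j} ≤ |a J|² ν(J) + λ(|J|) · multinomial(J) · ∏ |u_j|^{2 J_j}`, and by the
multinomial theorem the last terms of degree `m` sum to `λ(m) (∑_j |u_j|²)^m ≤ λ(m)`.
Regrouping the vanishing series by degree gives a power series in `t` that vanishes near `0`,
so every homogeneous part `∑_{|J| = m, supp J ⊆ s} a J ∏ (k_j x_j)^{J_j}` vanishes for all `x`.
As a polynomial in `x` it is then zero, and its coefficient `a I ∏ k_j^{I_j}` gives `a I = 0`.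
-/

open Finset

lemma mfact_pos (I : ℕ →₀ ℕ) : 0 < mfact I :=
  prod_pos fun _ _ => Nat.factorial_pos _

lemma mfact_mul_multinomial (I : ℕ →₀ ℕ) : mfact I * I.multinomial = (mdeg I).factorial :=
  Nat.multinomial_spec _ _

lemma mem_finsuppAntidiag_iff_mdeg {s : Finset ℕ} {n : ℕ} {I : ℕ →₀ ℕ} :
    I ∈ finsuppAntidiag s n ↔ mdeg I = n ∧ I.support ⊆ s :=
  mem_finsuppAntidiag'

lemma mem_finsuppAntidiag_support_mdeg (I : ℕ →₀ ℕ) : I ∈ finsuppAntidiag I.support (mdeg I) :=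
  mem_finsuppAntidiag_iff_mdeg.2 ⟨rfl, subset_rfl⟩

lemma prod_support_pow_eq_zero_of_not_subset {ι M₀ : Type*} [CommMonoidWithZero M₀]
    {s : Finset ι} {y : ι → M₀} (hy : ∀ j ∉ s, y j = 0) {I : ι →₀ ℕ} (hI : ¬ I.support ⊆ s) :
    ∏ j ∈ I.support, y j ^ I j = 0 := by
  obtain ⟨j, hjI, hjs⟩ := not_subset.1 hI
  exact prod_eq_zero hjI (by rw [hy j hjs, zero_pow (Finsupp.mem_support_iff.1 hjI)])

lemma sum_finsuppAntidiag_multinomial_mul_prod {ι R : Type*} [DecidableEq ι] [CommSemiring R]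
    (s : Finset ι) (y : ι → R) (n : ℕ) :
    ∑ I ∈ finsuppAntidiag s n, (I.multinomial : R) * ∏ j ∈ I.support, y j ^ I j =
      (∑ j ∈ s, y j) ^ n := by
  rw [sum_pow_eq_sum_piAntidiag, finsuppAntidiag, sum_map, ← sum_attach (piAntidiag s n)]
  refine sum_congr rfl fun f _ => ?_
  congr 1
  · rw [← Finsupp.multinomial_of_support_subset (s := s) (filter_subset _ _)]
    rfl
  · exact prod_filter_of_ne fun j _ hj h0 => hj (by simp [h0])

section Grouping

variable {M : Type*} [AddCommMonoid M] [TopologicalSpace M] {s : Finset ℕ} {g : (ℕ →₀ ℕ) → M}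

lemma hasSum_mdeg_fiber (hg : ∀ I, ¬ I.support ⊆ s → g I = 0) (n : ℕ) :
    HasSum (fun I : mdeg ⁻¹' {n} => g I) (∑ I ∈ finsuppAntidiag s n, g I) := by
  classical
  refine (hasSum_subtype_iff_indicator (f := g)).2 ?_
  have hA : ∀ I ∈ finsuppAntidiag s n, (mdeg ⁻¹' {n}).indicator g I = g I := fun I hI =>
    Set.indicator_of_mem (s := mdeg ⁻¹' {n}) (mem_finsuppAntidiag_iff_mdeg.1 hI).1 g
  rw [← sum_congr rfl hA]
  refine hasSum_sum_of_ne_finset_zero fun I hI => Set.indicator_apply_eq_zero.2 fun hIn => hg I ?_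
  exact fun hIs => hI (mem_finsuppAntidiag_iff_mdeg.2 ⟨hIn, hIs⟩)

lemma HasSum.sum_finsuppAntidiag [ContinuousAdd M] [RegularSpace M] {σ : M} (hσ : HasSum g σ)
    (hg : ∀ I, ¬ I.support ⊆ s → g I = 0) :
    HasSum (fun n => ∑ I ∈ finsuppAntidiag s n, g I) σ :=
  ((Equiv.sigmaPreimageEquiv mdeg).hasSum_iff.2 hσ).sigma (hasSum_mdeg_fiber hg)

end Grouping

lemma summable_of_summable_sum_finsuppAntidiag {s : Finset ℕ} {f : (ℕ →₀ ℕ) → ℝ} (hf : 0 ≤ f)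
    (hfs : ∀ I, ¬ I.support ⊆ s → f I = 0)
    (hsum : Summable fun n => ∑ I ∈ finsuppAntidiag s n, f I) : Summable f := by
  rw [← (Equiv.sigmaPreimageEquiv mdeg).summable_iff]
  exact (summable_sigma_of_nonneg fun _ => hf _).2 ⟨fun n => (hasSum_mdeg_fiber hfs n).summable,
    hsum.congr fun n => ((hasSum_mdeg_fiber hfs n).tsum_eq).symm⟩

lemma eq_zero_of_forall_hasSum_mul_pow {𝕜 : Type*} [NontriviallyNormedField 𝕜] {c : ℕ → 𝕜}
    {r : ℝ} (hr : 0 < r) (h : ∀ t : 𝕜, ‖t‖ < r → HasSum (fun m => c m * t ^ m) 0) : c = 0 := by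
  obtain ⟨t₀, ht₀, ht₀r⟩ := NormedField.exists_norm_lt 𝕜 hr
  set p := FormalMultilinearSeries.ofScalars 𝕜 c
  have hrad : (‖t₀‖₊ : ENNReal) ≤ p.radius := by
    refine p.le_radius_of_tendsto (l := 0) ?_
    simpa [p, FormalMultilinearSeries.ofScalars_norm] using
      (h t₀ ht₀r).summable.tendsto_atTop_zero.norm
  have hp : HasFPowerSeriesOnBall 0 p 0 ‖t₀‖₊ := by
    refine ⟨hrad, by simpa using ht₀, fun {y} hy => ?_⟩
    have hy' : ‖y‖ < r := (by simpa using hy : ‖y‖ < ‖t₀‖).trans ht₀r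
    simpa only [p, FormalMultilinearSeries.ofScalars_apply_eq, smul_eq_mul, zero_add,
      Pi.zero_apply] using h y hy'
  exact (FormalMultilinearSeries.ofScalars_series_eq_zero (E := 𝕜)).1 hp.hasFPowerSeriesAt.eq_zero

lemma nuwt_pos {lam k : ℕ → ℝ} (hlam : ∀ n, 0 < lam n) (hk : ∀ j, 0 < k j) (I : ℕ →₀ ℕ) :
    0 < nuwt lam k I := by
  have := mfact_pos I
  have := hlam (mdeg I)
  exact mul_pos (by positivity) (prod_pos fun j _ => pow_pos (hk j) _)

lemma sq_prod_div_nuwt {lam k : ℕ → ℝ} (y : ℕ → ℝ) {I : ℕ →₀ ℕ} (hlam : lam (mdeg I) ≠ 0)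
    (hk : ∀ j, k j ≠ 0) :
    (∏ j ∈ I.support, (k j * y j) ^ I j) ^ 2 / nuwt lam k I =
      lam (mdeg I) * I.multinomial * ∏ j ∈ I.support, (y j ^ 2) ^ I j := by
  have hfact : (mfact I : ℝ) * I.multinomial = (mdeg I).factorial := by
    exact_mod_cast mfact_mul_multinomial I
  have hmfact : (mfact I : ℝ) ≠ 0 := by exact_mod_cast (mfact_pos I).ne'
  have hk2 : ∏ j ∈ I.support, k j ^ (2 * I j) ≠ 0 :=
    prod_ne_zero_iff.2 fun j _ => pow_ne_zero _ (hk j)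
  have hsq : (∏ j ∈ I.support, (k j * y j) ^ I j) ^ 2 =
      (∏ j ∈ I.support, k j ^ (2 * I j)) * ∏ j ∈ I.support, (y j ^ 2) ^ I j := by
    rw [← prod_pow, ← prod_mul_distrib]
    exact prod_congr rfl fun j _ => by ring
  rw [hsq, nuwt, ← hfact]
  field_simp

lemma mul_le_sq_mul_add_sq_div {x c ν : ℝ} (hν : 0 < ν) : x * c ≤ x ^ 2 * ν + c ^ 2 / ν := by
  rw [← sub_nonneg]
  have : x ^ 2 * ν + c ^ 2 / ν - x * c = ((x * ν - c) ^ 2 + x ^ 2 * ν ^ 2 + c ^ 2) / (2 * ν) := by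
    field_simp
    ring
  rw [this]
  positivity

lemma summable_multinomial_weight {lam : ℕ → ℝ} (hlam : Summable lam) (hlam0 : ∀ n, 0 ≤ lam n)
    {s : Finset ℕ} {y : ℕ → ℝ} (hy0 : ∀ j, 0 ≤ y j) (hys : ∀ j ∉ s, y j = 0)
    (hy1 : ∑ j ∈ s, y j ≤ 1) :
    Summable fun I => lam (mdeg I) * I.multinomial * ∏ j ∈ I.support, y j ^ I j := by
  have hdeg : ∀ m, ∑ I ∈ finsuppAntidiag s m, lam (mdeg I) * I.multinomial *
      ∏ j ∈ I.support, y j ^ I j = lam m * (∑ j ∈ s, y j) ^ m := fun m => by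
    rw [← sum_finsuppAntidiag_multinomial_mul_prod, mul_sum]
    refine sum_congr rfl fun I hI => ?_
    rw [(mem_finsuppAntidiag_iff_mdeg.1 hI).1, mul_assoc]
  refine summable_of_summable_sum_finsuppAntidiag (s := s)
    (fun I => mul_nonneg (mul_nonneg (hlam0 _) (Nat.cast_nonneg _))
      (prod_nonneg fun j _ => pow_nonneg (hy0 j) _))
    (fun I hI => by rw [prod_support_pow_eq_zero_of_not_subset hys hI, mul_zero]) ?_
  have hsum0 : 0 ≤ ∑ j ∈ s, y j := sum_nonneg fun j _ => hy0 j
  refine hlam.of_nonneg_of_le (fun m => mul_nonneg (hlam0 m) (pow_nonneg hsum0 m))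
    (fun m => mul_le_of_le_one_right (hlam0 m) (pow_le_one₀ hsum0 hy1)) |>.congr
    fun m => (hdeg m).symm

lemma eq_zero_of_forall_sum_mul_prod_eq_zero {σ R : Type*} [CommRing R] [IsDomain R] [Infinite R]
    {s : Finset (σ →₀ ℕ)} {c : (σ →₀ ℕ) → R}
    (h : ∀ x : σ → R, ∑ I ∈ s, c I * ∏ j ∈ I.support, x j ^ I j = 0) {I : σ →₀ ℕ} (hI : I ∈ s) :
    c I = 0 := by
  classical
  set P : MvPolynomial σ R := ∑ J ∈ s, MvPolynomial.monomial J (c J)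
  have hP : P = 0 := MvPolynomial.funext fun x => by
    simpa [P, MvPolynomial.eval_monomial, Finsupp.prod] using h x
  have := congrArg (MvPolynomial.coeff I) hP
  simpa [P, MvPolynomial.coeff_sum, MvPolynomial.coeff_monomial, hI] using this

section Series

variable {lam k : ℕ → ℝ} {a : (ℕ →₀ ℕ) → ℂ}

lemma summable_norm_mul_prod (hlam_sum : Summable lam) (hlam_pos : ∀ n, 0 < lam n)
    (hk : ∀ j, 0 < k j) (ha : Summable fun I => ‖a I‖ ^ 2 * nuwt lam k I) {s : Finset ℕ}
    {u : ℕ → ℂ} (hus : ∀ j ∉ s, u j = 0) (hu1 : ∑ j ∈ s, ‖u j‖ ^ 2 ≤ 1) :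
    Summable fun I => ‖a I * ∏ j ∈ I.support, ((k j : ℂ) * u j) ^ I j‖ := by
  have hweight := summable_multinomial_weight hlam_sum (fun n => (hlam_pos n).le)
    (y := fun j => ‖u j‖ ^ 2) (fun j => sq_nonneg _) (fun j hj => by simp [hus j hj]) hu1
  refine Summable.of_nonneg_of_le (fun _ => norm_nonneg _) (fun I => ?_) (ha.add hweight)
  calc ‖a I * ∏ j ∈ I.support, ((k j : ℂ) * u j) ^ I j‖
      = ‖a I‖ * ∏ j ∈ I.support, (k j * ‖u j‖) ^ I j := by
        simp [norm_prod, abs_of_pos (hk _)]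
    _ ≤ ‖a I‖ ^ 2 * nuwt lam k I + (∏ j ∈ I.support, (k j * ‖u j‖) ^ I j) ^ 2 / nuwt lam k I :=
        mul_le_sq_mul_add_sq_div (nuwt_pos hlam_pos hk I)
    _ = _ := by rw [sq_prod_div_nuwt _ (hlam_pos _).ne' fun j => (hk j).ne']

lemma hasSum_sum_finsuppAntidiag_mul_pow (hlam_sum : Summable lam) (hlam_pos : ∀ n, 0 < lam n)
    (hk : ∀ j, 0 < k j) (ha : Summable fun I => ‖a I‖ ^ 2 * nuwt lam k I)
    (hvanish : ∀ u : lp (fun _ : ℕ => ℂ) 2, u ∈ Metric.ball (0 : lp (fun _ : ℕ => ℂ) 2) 1 →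
      ∑' I : ℕ →₀ ℕ, a I * ∏ j ∈ I.support, ((k j : ℂ) * u j) ^ I j = 0)
    (s : Finset ℕ) (x : ℕ → ℂ) {t : ℂ} (ht : ‖t‖ * ∑ j ∈ s, ‖x j‖ < 1) :
    HasSum (fun m => (∑ I ∈ finsuppAntidiag s m,
      a I * ∏ j ∈ I.support, ((k j : ℂ) * x j) ^ I j) * t ^ m) 0 := by
  set U : lp (fun _ : ℕ => ℂ) 2 := ∑ j ∈ s, lp.single 2 j (t * x j)
  have hU : ∀ j, U j = if j ∈ s then t * x j else 0 := fun j => by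
    simp only [U, lp.coeFn_sum, lp.coeFn_single, Finset.sum_apply, Finset.sum_pi_single]
  have hUnorm : ‖U‖ < 1 := (norm_sum_le _ _).trans_lt (by simpa [norm_mul, mul_sum] using ht)
  have hUs : ∀ j ∉ s, U j = 0 := fun j hj => by rw [hU, if_neg hj]
  have hU1 : ∑ j ∈ s, ‖U j‖ ^ 2 ≤ 1 := by
    have := lp.sum_rpow_le_norm_rpow (p := 2) (by norm_num) U s
    simp only [ENNReal.toReal_ofNat, Real.rpow_two] at this
    nlinarith [norm_nonneg U]
  have hsum := (summable_norm_mul_prod hlam_sum hlam_pos hk ha hUs hU1).of_norm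
  have hzero := hsum.hasSum_iff.2 (hvanish U (mem_ball_zero_iff.2 hUnorm))
  refine (hzero.sum_finsuppAntidiag (s := s) fun I hI => mul_eq_zero_of_right _
    (prod_support_pow_eq_zero_of_not_subset (fun j hj => by rw [hUs j hj, mul_zero]) hI)).congr_fun
    fun m => ?_
  rw [sum_mul]
  refine sum_congr rfl fun I hI => ?_
  obtain ⟨hIm, hIs⟩ := mem_finsuppAntidiag_iff_mdeg.1 hI
  rw [mul_assoc, ← hIm, mdeg, Finsupp.sum, ← prod_pow_eq_pow_sum, ← prod_mul_distrib]
  congr 1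
  refine prod_congr rfl fun j hj => ?_
  rw [hU, if_pos (hIs hj)]
  ring

lemma sum_finsuppAntidiag_mul_prod_eq_zero (hlam_sum : Summable lam) (hlam_pos : ∀ n, 0 < lam n)
    (hk : ∀ j, 0 < k j) (ha : Summable fun I => ‖a I‖ ^ 2 * nuwt lam k I)
    (hvanish : ∀ u : lp (fun _ : ℕ => ℂ) 2, u ∈ Metric.ball (0 : lp (fun _ : ℕ => ℂ) 2) 1 →
      ∑' I : ℕ →₀ ℕ, a I * ∏ j ∈ I.support, ((k j : ℂ) * u j) ^ I j = 0)
    (s : Finset ℕ) (x : ℕ → ℂ) (m : ℕ) :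
    ∑ I ∈ finsuppAntidiag s m, a I * ∏ j ∈ I.support, ((k j : ℂ) * x j) ^ I j = 0 := by
  set B := ∑ j ∈ s, ‖x j‖
  have hB : 0 ≤ B := sum_nonneg fun j _ => norm_nonneg _
  refine congrFun (eq_zero_of_forall_hasSum_mul_pow (r := (B + 1)⁻¹) (by positivity)
    fun t ht => hasSum_sum_finsuppAntidiag_mul_pow hlam_sum hlam_pos hk ha hvanish s x ?_) m
  calc ‖t‖ * B ≤ ‖t‖ * (B + 1) := by gcongr; linarith
    _ < (B + 1)⁻¹ * (B + 1) := by gcongr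
    _ = 1 := inv_mul_cancel₀ (by positivity)

end Series

theorem stmt14 (lam : ℕ → ℝ) (hlam_sum : Summable lam) (hlam_pos : ∀ n, 0 < lam n)
    (k : ℕ → ℝ) (hk : ∀ j, 0 < k j)
    (a : (ℕ →₀ ℕ) → ℂ)
    (ha : Summable fun I => ‖a I‖ ^ 2 * nuwt lam k I)
    (hvanish : ∀ u : lp (fun _ : ℕ => ℂ) 2, u ∈ Metric.ball (0 : lp (fun _ : ℕ => ℂ) 2) 1 →
      ∑' I : ℕ →₀ ℕ, a I * ∏ j ∈ I.support, ((k j : ℂ) * u j) ^ I j = 0) :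
    ∀ I : ℕ →₀ ℕ, a I = 0 := by
  intro I
  refine eq_zero_of_forall_sum_mul_prod_eq_zero (fun x => ?_) (mem_finsuppAntidiag_support_mdeg I)
  have hk' : ∀ j, (k j : ℂ) ≠ 0 := fun j => Complex.ofReal_ne_zero.2 (hk j).ne'
  simpa [mul_div_cancel₀ _ (hk' _)] using sum_finsuppAntidiag_mul_prod_eq_zero hlam_sum hlam_pos
    hk ha hvanish I.support (fun j => x j / k j) (mdeg I)
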